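/- arXiv:1704.08634 — 3 statements merged into one kernel-verified Lean document; each statement's English description precedes it below -/
import Mathlib

section
/- Generalized Chu–Vandermonde identity: Let S and S̄ be finite sets, let π : S → S̄ be any map, and let k : S → ℕ and m : S̄ → ℕ. Then ∑_ℓ ∏_{s∈S} C(k(s), ℓ(s)) = ∏_{x∈S̄} C(∑_{s∈π⁻¹(x)} k(s), m(x)), where C(a,b) denotes the binomial coefficient and the sum ranges over all functions ℓ : S → ℕ such that ℓ(s) ≤ k(s) for every s ∈ S and ∑_{s∈π⁻¹(x)} ℓ(s) = m(x) for every x ∈ S̄. -/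
open Finset MvPolynomial

lemma prod_monomial_one {σ R ι : Type*} [CommSemiring R] (t : Finset ι) (d : ι → (σ →₀ ℕ)) :
    ∏ i ∈ t, monomial (d i) (1 : R) = monomial (∑ i ∈ t, d i) 1 := by
  induction t using Finset.cons_induction with
  | empty => simp
  | cons a t ha ih => rw [prod_cons, sum_cons, ih, monomial_mul, one_mul]

lemma coeff_prod_one_add_X_pow {S Sb : Type*} [Fintype S] [DecidableEq S] [Fintype Sb] [DecidableEq Sb]
    (π : S → Sb) (k : S → ℕ) (m : Sb → ℕ) :
    MvPolynomial.coeff (Finsupp.equivFunOnFinite.symm m)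
      (∏ s : S, ((1 : MvPolynomial Sb ℕ) + X (π s)) ^ k s)
    = ∑ ℓ ∈ (Fintype.piFinset (fun s => Finset.range (k s + 1))).filter
        (fun ℓ : S → ℕ =>
          ∀ x : Sb, ∑ s ∈ Finset.univ.filter (fun s => π s = x), ℓ s = m x),
      ∏ s, Nat.choose (k s) (ℓ s) := by
  have h1 : ∀ s : S, ((1 : MvPolynomial Sb ℕ) + X (π s)) ^ k s
      = ∑ j ∈ Finset.range (k s + 1),
          MvPolynomial.C ((k s).choose j : ℕ) * monomial (Finsupp.single (π s) j) 1 := by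
    intro s
    rw [add_comm, add_pow]
    refine Finset.sum_congr rfl fun j hj => ?_
    rw [one_pow, mul_one, X_pow_eq_monomial, mul_comm, eq_natCast (MvPolynomial.C (σ := Sb))]
  simp_rw [h1]
  rw [Finset.prod_univ_sum]
  rw [MvPolynomial.coeff_sum]
  rw [Finset.sum_filter]
  refine Finset.sum_congr rfl fun ℓ hℓ => ?_
  rw [Finset.prod_mul_distrib, ← map_prod, prod_monomial_one, coeff_C_mul, coeff_monomial]
  have hiff : ((∑ s : S, Finsupp.single (π s) (ℓ s)) = Finsupp.equivFunOnFinite.symm m)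
      ↔ ∀ x : Sb, ∑ s ∈ Finset.univ.filter (fun s => π s = x), ℓ s = m x := by
    rw [Finsupp.ext_iff]
    refine forall_congr' fun x => ?_
    rw [Finset.sum_apply']
    simp [Finsupp.single_apply, Finset.sum_filter]
  by_cases h : ∀ x : Sb, ∑ s ∈ Finset.univ.filter (fun s => π s = x), ℓ s = m x
  · simp [h, hiff.mpr h]
  · rw [if_neg h, if_neg (fun hc => h (hiff.mp hc)), mul_zero]

/-- Generalized Chu–Vandermonde identity: for finite sets `S`, `S̄`, a map `π : S → S̄`,
and `k : S → ℕ`, `m : S̄ → ℕ`, the sum of `∏ s, C(k s, ℓ s)` over all `ℓ : S → ℕ` with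
`ℓ ≤ k` pointwise and `∑_{s ∈ π⁻¹(x)} ℓ s = m x` for every `x`, equals
`∏ x, C(∑_{s ∈ π⁻¹(x)} k s, m x)`. -/
theorem generalized_chu_vandermonde
    {S Sb : Type*} [Fintype S] [DecidableEq S] [Fintype Sb] [DecidableEq Sb]
    (π : S → Sb) (k : S → ℕ) (m : Sb → ℕ) :
    ∑ ℓ ∈ (Fintype.piFinset (fun s => Finset.range (k s + 1))).filter
        (fun ℓ : S → ℕ =>
          ∀ x : Sb, ∑ s ∈ Finset.univ.filter (fun s => π s = x), ℓ s = m x),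
      ∏ s, Nat.choose (k s) (ℓ s)
      = ∏ x : Sb,
          Nat.choose (∑ s ∈ Finset.univ.filter (fun s => π s = x), k s) (m x) := by
  set K : Sb → ℕ := fun x => ∑ s ∈ Finset.univ.filter (fun s => π s = x), k s with hK
  have hprod : (∏ s : S, ((1 : MvPolynomial Sb ℕ) + X (π s)) ^ k s)
      = ∏ x : Sb, ((1 : MvPolynomial Sb ℕ) + X (id x)) ^ K x := by
    rw [← Finset.prod_fiberwise Finset.univ π (fun s => ((1 : MvPolynomial Sb ℕ) + X (π s)) ^ k s)]
    refine Finset.prod_congr rfl fun x _ => ?_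
    calc ∏ i ∈ Finset.univ.filter (fun i => π i = x), ((1 : MvPolynomial Sb ℕ) + X (π i)) ^ k i
        = ∏ i ∈ Finset.univ.filter (fun i => π i = x), ((1 : MvPolynomial Sb ℕ) + X x) ^ k i :=
          Finset.prod_congr rfl (fun i hi => by
            rw [(Finset.mem_filter.mp hi).2])
      _ = ((1 : MvPolynomial Sb ℕ) + X (id x)) ^ K x := by
          rw [Finset.prod_pow_eq_pow_sum, hK, id]
  have key := coeff_prod_one_add_X_pow π k m
  have key2 := coeff_prod_one_add_X_pow (id : Sb → Sb) K m
  rw [hprod, key2] at key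
  rw [← key]
  -- now evaluate the id-sum
  have hfilter : ∀ x : Sb, Finset.univ.filter (fun s : Sb => id s = x) = {x} := by
    intro x; ext y; simp
  have : ∀ ℓ : Sb → ℕ, (∀ x : Sb, ∑ s ∈ Finset.univ.filter (fun s : Sb => id s = x), ℓ s = m x)
      ↔ ℓ = m := by
    intro ℓ
    simp_rw [hfilter, Finset.sum_singleton]
    exact ⟨fun h => funext h, fun h x => by rw [h]⟩
  rw [Finset.sum_filter]
  simp_rw [this]
  rw [Finset.sum_ite_eq' (Fintype.piFinset fun x => Finset.range (K x + 1)) m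
    (fun ℓ => ∏ x, (K x).choose (ℓ x))]
  by_cases hm : m ∈ Fintype.piFinset fun x => Finset.range (K x + 1)
  · rw [if_pos hm]
  · rw [if_neg hm]
    symm
    simp only [Fintype.mem_piFinset, Finset.mem_range, not_forall, not_lt] at hm
    obtain ⟨x, hx⟩ := hm
    exact Finset.prod_eq_zero (Finset.mem_univ x) (Nat.choose_eq_zero_of_lt hx)
end

section
/- Existence of Hepp-sector ultrametrics: For every m ∈ ℕ there exists a constant C ≥ 1 such that for every integer d ≥ 1, every finite set V with |V| = m, and every injective map x : V → ℝ^d, there exists a function ρ : V × V → ℝ satisfying: (i) ρ is symmetric and ρ(v, v) = 0 for all v; (ii) ρ satisfies the ultrametric inequality ρ(u, w) ≤ max(ρ(u, v), ρ(v, w)) for all u, v, w ∈ V; (iii) ρ(v, w) ∈ {2^{−k} : k ∈ ℤ} whenever v ≠ w; and (iv) C^{−1}·ρ(v, w) ≤ ‖x_v − x_w‖ ≤ C·ρ(v, w) for all v ≠ w. The constant C depends only on m, not on d or on the configuration x. -/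
/-!
Single-linkage clustering. Call `v, w` linked at scale `t` if some chain of points from `v`
to `w` has all its steps of length at most `t`, and let `δ v w` be the least such scale
(the bottleneck, or minimax, distance; it is the label at the least common ancestor of
`v, w` in the minimal spanning tree). Concatenating chains shows that `δ` is an ultrametric;
the one-step chain gives `δ v w ≤ ‖x v - x w‖`, and a shortest chain, having fewer than
`m` steps, gives `‖x v - x w‖ ≤ m δ v w`. Rounding `δ` down to a power of `2` is monotone,
so it keeps the ultrametric inequality and loses at most a factor `2`.
-/

open Finset

noncomputable section

def dyadicFloor (r : ℝ) : ℝ := if 0 < r then 2 ^ Int.log 2 r else 0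

lemma dyadicFloor_of_pos {r : ℝ} (hr : 0 < r) : dyadicFloor r = 2 ^ Int.log 2 r := if_pos hr

lemma dyadicFloor_of_nonpos {r : ℝ} (hr : r ≤ 0) : dyadicFloor r = 0 := if_neg hr.not_gt

lemma dyadicFloor_nonneg (r : ℝ) : 0 ≤ dyadicFloor r := by
  unfold dyadicFloor; split_ifs <;> positivity

lemma dyadicFloor_le {r : ℝ} (hr : 0 ≤ r) : dyadicFloor r ≤ r := by
  rcases hr.lt_or_eq with hr | rfl
  · rw [dyadicFloor_of_pos hr]
    exact_mod_cast Int.zpow_log_le_self one_lt_two hr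
  · exact (dyadicFloor_of_nonpos le_rfl).le

lemma lt_two_mul_dyadicFloor {r : ℝ} (hr : 0 < r) : r < 2 * dyadicFloor r := by
  have h := Int.lt_zpow_succ_log_self (R := ℝ) one_lt_two r
  rw [Nat.cast_ofNat, zpow_add_one₀ two_ne_zero] at h
  rwa [dyadicFloor_of_pos hr, mul_comm]

lemma dyadicFloor_monotone : Monotone dyadicFloor := by
  intro r s hrs
  by_cases hr : 0 < r
  · rw [dyadicFloor_of_pos hr, dyadicFloor_of_pos (hr.trans_le hrs)]
    exact zpow_le_zpow_right₀ one_le_two (Int.log_mono_right hr hrs)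
  · rw [dyadicFloor_of_nonpos (not_lt.mp hr)]
    exact dyadicFloor_nonneg s

section Bottleneck

variable {V E : Type*} [PseudoMetricSpace E] (x : V → E)

def thresholdGraph (t : ℝ) : SimpleGraph V :=
  SimpleGraph.fromRel fun a b => dist (x a) (x b) ≤ t

variable {x}

lemma thresholdGraph_mono : Monotone (thresholdGraph x) := by
  intro s t hst a b hab
  rw [thresholdGraph, SimpleGraph.fromRel_adj] at hab ⊢
  exact ⟨hab.1, hab.2.imp (·.trans hst) (·.trans hst)⟩

lemma thresholdGraph_reachable_of_dist_le {t : ℝ} {v w : V} (h : dist (x v) (x w) ≤ t) :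
    (thresholdGraph x t).Reachable v w := by
  by_cases hvw : v = w
  · exact hvw ▸ SimpleGraph.Reachable.refl v
  · exact SimpleGraph.Adj.reachable ((SimpleGraph.fromRel_adj _ _ _).mpr ⟨hvw, .inl h⟩)

lemma dist_le_length_mul_of_walk {t : ℝ} {v w : V} (p : (thresholdGraph x t).Walk v w) :
    dist (x v) (x w) ≤ p.length * t := by
  induction p with
  | nil => simp
  | @cons u a w hua p ih =>
    have hstep : dist (x u) (x a) ≤ t := by
      obtain ⟨-, h | h⟩ := (SimpleGraph.fromRel_adj _ _ _).mp hua
      exacts [h, dist_comm (x u) (x a) ▸ h]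
    calc dist (x u) (x w) ≤ dist (x u) (x a) + dist (x a) (x w) := dist_triangle _ _ _
      _ ≤ t + p.length * t := add_le_add hstep ih
      _ = (p.cons hua).length * t := by rw [SimpleGraph.Walk.length_cons]; push_cast; ring

lemma dist_le_card_mul_of_reachable [Fintype V] {t : ℝ} (ht : 0 ≤ t) {v w : V}
    (h : (thresholdGraph x t).Reachable v w) : dist (x v) (x w) ≤ Fintype.card V * t := by
  obtain ⟨p, hp⟩ := h.exists_isPath
  calc dist (x v) (x w) ≤ p.length * t := dist_le_length_mul_of_walk p
    _ ≤ Fintype.card V * t := by gcongr; exact_mod_cast hp.length_lt.le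

variable [Fintype V]

variable (x) in
def pairDists : Finset ℝ := univ.image fun p : V × V => dist (x p.1) (x p.2)

lemma dist_mem_pairDists (v w : V) : dist (x v) (x w) ∈ pairDists x :=
  mem_image_of_mem _ (mem_univ (v, w))

lemma nonneg_of_mem_pairDists {t : ℝ} (ht : t ∈ pairDists x) : 0 ≤ t := by
  obtain ⟨p, -, rfl⟩ := mem_image.mp ht
  exact dist_nonneg

-- Only the finitely many pairwise distances matter, so the least linking scale is a minimum.
open Classical in
variable (x) in
def linkScales (v w : V) : Finset ℝ :=
  {t ∈ pairDists x | (thresholdGraph x t).Reachable v w}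

lemma mem_linkScales {t : ℝ} {v w : V} :
    t ∈ linkScales x v w ↔ t ∈ pairDists x ∧ (thresholdGraph x t).Reachable v w := by
  classical
  unfold linkScales
  exact mem_filter

lemma linkScales_nonempty (v w : V) : (linkScales x v w).Nonempty :=
  ⟨_, mem_linkScales.mpr ⟨dist_mem_pairDists v w, thresholdGraph_reachable_of_dist_le le_rfl⟩⟩

variable (x) in
def bottleneckDist (v w : V) : ℝ := (linkScales x v w).min' (linkScales_nonempty v w)

lemma bottleneckDist_mem_linkScales (v w : V) : bottleneckDist x v w ∈ linkScales x v w :=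
  min'_mem _ _

lemma bottleneckDist_le {t : ℝ} {v w : V} (ht : t ∈ pairDists x)
    (h : (thresholdGraph x t).Reachable v w) : bottleneckDist x v w ≤ t :=
  min'_le _ _ (mem_linkScales.mpr ⟨ht, h⟩)

lemma bottleneckDist_mem_pairDists (v w : V) : bottleneckDist x v w ∈ pairDists x :=
  (mem_linkScales.mp (bottleneckDist_mem_linkScales v w)).1

lemma reachable_bottleneckDist (v w : V) :
    (thresholdGraph x (bottleneckDist x v w)).Reachable v w :=
  (mem_linkScales.mp (bottleneckDist_mem_linkScales v w)).2

lemma bottleneckDist_nonneg (v w : V) : 0 ≤ bottleneckDist x v w :=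
  nonneg_of_mem_pairDists (bottleneckDist_mem_pairDists v w)

lemma bottleneckDist_self (v : V) : bottleneckDist x v v = 0 :=
  le_antisymm (bottleneckDist_le (dist_self (x v) ▸ dist_mem_pairDists v v) .rfl)
    (bottleneckDist_nonneg v v)

lemma bottleneckDist_comm (v w : V) : bottleneckDist x v w = bottleneckDist x w v :=
  le_antisymm
    (bottleneckDist_le (bottleneckDist_mem_pairDists w v) (reachable_bottleneckDist w v).symm)
    (bottleneckDist_le (bottleneckDist_mem_pairDists v w) (reachable_bottleneckDist v w).symm)

lemma bottleneckDist_le_max (u v w : V) :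
    bottleneckDist x u w ≤ max (bottleneckDist x u v) (bottleneckDist x v w) := by
  have hmem : max (bottleneckDist x u v) (bottleneckDist x v w) ∈ pairDists x := by
    rcases max_choice (bottleneckDist x u v) (bottleneckDist x v w) with h | h <;> rw [h]
    exacts [bottleneckDist_mem_pairDists u v, bottleneckDist_mem_pairDists v w]
  exact bottleneckDist_le hmem <|
    ((reachable_bottleneckDist u v).mono (thresholdGraph_mono (le_max_left _ _))).trans
      ((reachable_bottleneckDist v w).mono (thresholdGraph_mono (le_max_right _ _)))

lemma bottleneckDist_le_dist (v w : V) : bottleneckDist x v w ≤ dist (x v) (x w) :=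
  bottleneckDist_le (dist_mem_pairDists v w) (thresholdGraph_reachable_of_dist_le le_rfl)

lemma dist_le_card_mul_bottleneckDist (v w : V) :
    dist (x v) (x w) ≤ Fintype.card V * bottleneckDist x v w :=
  dist_le_card_mul_of_reachable (bottleneckDist_nonneg v w) (reachable_bottleneckDist v w)

lemma bottleneckDist_pos {E : Type*} [MetricSpace E] {x : V → E} (hx : Function.Injective x)
    {v w : V} (hvw : v ≠ w) : 0 < bottleneckDist x v w := by
  refine (bottleneckDist_nonneg v w).lt_of_ne fun h => hvw (hx (dist_le_zero.mp ?_))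
  simpa [← h] using dist_le_card_mul_bottleneckDist (x := x) v w

end Bottleneck

end

/-- Existence of Hepp-sector ultrametrics: for every `m` there is a constant `C ≥ 1`,
depending only on `m`, such that any injective configuration of `m` points in `ℝ^d`
admits a dyadic-valued ultrametric `ρ` comparable (up to the factor `C`) to the
Euclidean distances between the points. -/
theorem hepp_sector_ultrametric (m : ℕ) :
    ∃ C : ℝ, 1 ≤ C ∧
      ∀ (d : ℕ), 1 ≤ d →
      ∀ (V : Type) (instV : Fintype V), @Fintype.card V instV = m →
      ∀ x : V → EuclideanSpace ℝ (Fin d), Function.Injective x →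
      ∃ ρ : V → V → ℝ,
        (∀ v w, ρ v w = ρ w v) ∧
        (∀ v, ρ v v = 0) ∧
        (∀ u v w, ρ u w ≤ max (ρ u v) (ρ v w)) ∧
        (∀ v w, v ≠ w → ∃ k : ℤ, ρ v w = (2 : ℝ) ^ (-k)) ∧
        (∀ v w, v ≠ w →
          C⁻¹ * ρ v w ≤ ‖x v - x w‖ ∧ ‖x v - x w‖ ≤ C * ρ v w) := by
  refine ⟨2 * m + 1, by simp, fun d _ V _ hcard x hx => ?_⟩
  have hC : (1 : ℝ) ≤ 2 * m + 1 := by simp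
  refine ⟨fun v w => dyadicFloor (bottleneckDist x v w), fun v w => ?_, fun v => ?_,
    fun u v w => ?_, fun v w hvw => ⟨-Int.log 2 (bottleneckDist x v w), ?_⟩, fun v w hvw => ?_⟩
    <;> dsimp only
  · rw [bottleneckDist_comm]
  · rw [bottleneckDist_self, dyadicFloor_of_nonpos le_rfl]
  · rw [← dyadicFloor_monotone.map_max]
    exact dyadicFloor_monotone (bottleneckDist_le_max u v w)
  · rw [neg_neg, dyadicFloor_of_pos (bottleneckDist_pos hx hvw)]
  · set δ := bottleneckDist x v w
    have hρ := dyadicFloor_nonneg δ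
    rw [← dist_eq_norm]
    constructor
    · calc (2 * m + 1 : ℝ)⁻¹ * dyadicFloor δ ≤ dyadicFloor δ :=
            mul_le_of_le_one_left hρ (inv_le_one_of_one_le₀ hC)
        _ ≤ δ := dyadicFloor_le (bottleneckDist_nonneg v w)
        _ ≤ dist (x v) (x w) := bottleneckDist_le_dist v w
    · calc dist (x v) (x w) ≤ m * δ := hcard ▸ dist_le_card_mul_bottleneckDist v w
        _ ≤ m * (2 * dyadicFloor δ) := by
            gcongr; exact (lt_two_mul_dyadicFloor (bottleneckDist_pos hx hvw)).le
        _ ≤ (2 * m + 1) * dyadicFloor δ := by nlinarith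
end

section
/- Tree summability for large scales: Let T be a finite rooted tree and let η : T → ℝ. Assume that for every nonempty lower set S ⊆ T one has ∑_{u∈S} η(u) < 0. Then the family of nonnegative real numbers ∏_{u∈T} 2^{−η(u)·n(u)}, indexed by all monotone functions n : T → ℤ satisfying n(u) ≤ 0 for every u ∈ T, is summable. -/
/-!
Write `m = -n`, an antitone function `T → ℕ`. By the layer-cake formula
`∑ᵤ m u η u = ∑_{k < max m} ∑_{u ∈ {m > k}} η u`, and each `{m > k}` is a nonempty
lower set, so this is at most `-ε · max m ≤ -(ε / |T|) ∑ᵤ m u`, where `-ε < 0` is the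
largest value of `∑_S η` over the finitely many nonempty lower sets `S`. Hence every term
is dominated by `∏ᵤ rᵐ⁽ᵘ⁾` with `r = 2^(-ε/|T|) < 1`, a summable family on `T → ℕ`.
-/

open Finset

theorem Finset.sum_nsmul_eq_sum_range_sum_filter_lt {ι M : Type*} [Fintype ι]
    [AddCommMonoid M] (m : ι → ℕ) (f : ι → M) {K : ℕ} (hK : ∀ i, m i ≤ K) :
    ∑ i, m i • f i = ∑ k ∈ range K, ∑ i with k < m i, f i := by
  calc ∑ i, m i • f i = ∑ i, ∑ _k ∈ range (m i), f i := by simp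
    _ = ∑ k ∈ range K, ∑ i with k < m i, f i := by
      refine sum_comm' fun i k => ?_
      have := hK i
      simp only [mem_univ, mem_range, mem_filter, true_and]
      omega

theorem summable_prod_pow_of_lt_one {ι : Type*} [Fintype ι] {r : ℝ} (h0 : 0 ≤ r)
    (h1 : r < 1) : Summable fun m : ι → ℕ => ∏ i, r ^ m i := by
  classical
  refine summable_of_sum_le (c := ∏ _i : ι, ∑' k : ℕ, r ^ k) (fun m => by positivity)
    fun s => ?_
  have hs : s ⊆ Fintype.piFinset fun i => s.image (· i) := fun m hm => by
    simpa only [Fintype.mem_piFinset] using fun i => mem_image_of_mem (· i) hm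
  calc ∑ m ∈ s, ∏ i, r ^ m i
      ≤ ∑ m ∈ Fintype.piFinset fun i => s.image (· i), ∏ i, r ^ m i :=
        sum_le_sum_of_subset_of_nonneg hs fun _ _ _ => by positivity
    _ = ∏ i, ∑ k ∈ s.image (· i), r ^ k := (prod_univ_sum _ _).symm
    _ ≤ ∏ _i : ι, ∑' k : ℕ, r ^ k := by
      gcongr with i
      exact (summable_geometric_of_lt_one h0 h1).sum_le_tsum _ fun k _ => by positivity

theorem exists_pos_forall_le_neg_of_forall_lt_zero {α : Type*} [Finite α] {p : α → Prop}
    {f : α → ℝ} (hf : ∀ a, p a → f a < 0) : ∃ ε > 0, ∀ a, p a → f a ≤ -ε := by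
  classical
  have := Fintype.ofFinite α
  rcases (univ.filter p).eq_empty_or_nonempty with hp | hp
  · exact ⟨1, one_pos, fun a ha => absurd (mem_filter.2 ⟨mem_univ a, ha⟩) (by simp [hp])⟩
  · obtain ⟨a₀, ha₀, hmax⟩ := exists_max_image _ f hp
    exact ⟨-f a₀, by linarith [hf a₀ (mem_filter.1 ha₀).2],
      fun a ha => by linarith [hmax a (mem_filter.2 ⟨mem_univ a, ha⟩)]⟩

section LowerSets

variable {T : Type*} [Fintype T] [Preorder T] {η : T → ℝ} {ε : ℝ}

theorem sum_mul_le_neg_mul_sup_of_antitone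
    (hε : ∀ S : Finset T, S.Nonempty → IsLowerSet (S : Set T) → ∑ u ∈ S, η u ≤ -ε)
    {m : T → ℕ} (hm : Antitone m) :
    ∑ u, (m u : ℝ) * η u ≤ -ε * (univ.sup m : ℕ) := by
  classical
  have hlayer : ∀ k ∈ range (univ.sup m), ∑ u with k < m u, η u ≤ -ε := fun k hk => by
    refine hε _ ?_ fun u v hvu hu => ?_
    · simpa [Finset.Nonempty] using Finset.lt_sup_iff.1 (mem_range.1 hk)
    · simp only [coe_filter, mem_univ, true_and, Set.mem_ofPred_eq] at hu ⊢
      exact hu.trans_le (hm hvu)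
  calc ∑ u, (m u : ℝ) * η u = ∑ u, m u • η u := by simp [nsmul_eq_mul]
    _ = ∑ k ∈ range (univ.sup m), ∑ u with k < m u, η u :=
      sum_nsmul_eq_sum_range_sum_filter_lt m η fun u => le_sup (mem_univ u)
    _ ≤ ∑ _k ∈ range (univ.sup m), -ε := sum_le_sum hlayer
    _ = -ε * (univ.sup m : ℕ) := by simp [mul_comm]

theorem sum_mul_le_neg_div_card_mul_sum_of_antitone (hε₀ : 0 ≤ ε)
    (hε : ∀ S : Finset T, S.Nonempty → IsLowerSet (S : Set T) → ∑ u ∈ S, η u ≤ -ε)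
    {m : T → ℕ} (hm : Antitone m) :
    ∑ u, (m u : ℝ) * η u ≤ -(ε / Fintype.card T) * ∑ u, (m u : ℝ) := by
  have hsum : ∑ u, (m u : ℝ) ≤ Fintype.card T * (univ.sup m : ℕ) := by
    exact_mod_cast (sum_le_card_nsmul univ m _ fun u _ => le_sup (mem_univ u)).trans_eq
      (smul_eq_mul ..)
  calc ∑ u, (m u : ℝ) * η u ≤ -ε * (univ.sup m : ℕ) :=
        sum_mul_le_neg_mul_sup_of_antitone hε hm
    _ ≤ -(ε / Fintype.card T) * ∑ u, (m u : ℝ) := by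
      rw [neg_mul, neg_mul, neg_le_neg_iff, div_mul_eq_mul_div]
      rcases (Fintype.card T).eq_zero_or_pos with hT | hT
      · simp [Fintype.card_eq_zero_iff.1 hT]
      · rw [div_le_iff₀ (by exact_mod_cast hT)]
        nlinarith

theorem prod_rpow_mul_le_prod_pow_of_antitone {b : ℝ} (hb : 1 ≤ b) (hε₀ : 0 ≤ ε)
    (hε : ∀ S : Finset T, S.Nonempty → IsLowerSet (S : Set T) → ∑ u ∈ S, η u ≤ -ε)
    {m : T → ℕ} (hm : Antitone m) :
    ∏ u, b ^ ((m u : ℝ) * η u) ≤ ∏ u, (b ^ (-(ε / Fintype.card T))) ^ m u := by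
  have hb₀ : 0 < b := one_pos.trans_le hb
  calc ∏ u, b ^ ((m u : ℝ) * η u) = b ^ ∑ u, (m u : ℝ) * η u :=
        (Real.rpow_sum_of_pos hb₀ _ _).symm
    _ ≤ b ^ (-(ε / Fintype.card T) * ∑ u, (m u : ℝ)) :=
      Real.rpow_le_rpow_of_exponent_le hb
        (sum_mul_le_neg_div_card_mul_sum_of_antitone hε₀ hε hm)
    _ = ∏ u, (b ^ (-(ε / Fintype.card T))) ^ m u := by
      simp only [mul_sum, Real.rpow_sum_of_pos hb₀, Real.rpow_mul_natCast hb₀.le]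

end LowerSets

theorem tree_summability_large_scales_general
    (T : Type) [Fintype T] [PartialOrder T] [OrderBot T]
    (η : T → ℝ)
    (hη : ∀ S : Finset T, S.Nonempty → (∀ u ∈ S, ∀ v : T, v ≤ u → v ∈ S) →
      ∑ u ∈ S, η u < 0) :
    Summable (fun n : {n : T → ℤ // Monotone n ∧ ∀ u : T, n u ≤ 0} =>
      ∏ u : T, (2 : ℝ) ^ (-(η u * (n.1 u : ℝ)))) := by
  obtain ⟨ε, hε₀, hε⟩ := exists_pos_forall_le_neg_of_forall_lt_zero
    (p := fun S : Finset T => S.Nonempty ∧ IsLowerSet (S : Set T))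
    (f := fun S => ∑ u ∈ S, η u)
    fun S hS => hη S hS.1 fun u hu v hvu => hS.2 hvu hu
  have hr : (2 : ℝ) ^ (-(ε / Fintype.card T)) < 1 :=
    Real.rpow_lt_one_of_one_lt_of_neg one_lt_two (neg_lt_zero.2 (by positivity))
  let m (n : {n : T → ℤ // Monotone n ∧ ∀ u : T, n u ≤ 0}) (u : T) : ℕ := (-n.1 u).toNat
  have hm_cast (n) (u : T) : (m n u : ℤ) = -n.1 u :=
    Int.toNat_of_nonneg (neg_nonneg.2 (n.2.2 u))
  have hm_inj : Function.Injective m := fun n₁ n₂ h => Subtype.ext <| funext fun u => by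
    have := hm_cast n₁ u; have := hm_cast n₂ u; have := congrFun h u; omega
  refine ((summable_prod_pow_of_lt_one (by positivity) hr).comp_injective hm_inj).of_nonneg_of_le
    (fun n => by positivity) fun n => ?_
  have hanti : Antitone (m n) := fun u v huv => by
    have := hm_cast n u; have := hm_cast n v; have := n.2.1 huv; omega
  refine le_of_eq_of_le (prod_congr rfl fun u _ => ?_)
    (prod_rpow_mul_le_prod_pow_of_antitone one_le_two hε₀.le
      (fun S hS hlow => hε S ⟨hS, hlow⟩) hanti)
  rw [← Int.cast_natCast, hm_cast, Int.cast_neg, neg_mul, mul_comm]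

/-- Tree summability for large scales: on a finite rooted tree `T` (partial order with least
element whose principal down-sets are chains), if every nonempty lower set `S ⊆ T` satisfies
`∑_{u ∈ S} η u < 0`, then the family `∏_u 2^{-η(u) n(u)}`, indexed by monotone
`n : T → ℤ` with `n ≤ 0`, is summable. -/
theorem tree_summability_large_scales
    (T : Type) [Fintype T] [PartialOrder T] [OrderBot T]
    (hchain : ∀ u v w : T, v ≤ u → w ≤ u → v ≤ w ∨ w ≤ v)
    (η : T → ℝ)
    (hη : ∀ S : Finset T, S.Nonempty → (∀ u ∈ S, ∀ v : T, v ≤ u → v ∈ S) →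
      ∑ u ∈ S, η u < 0) :
    Summable (fun n : {n : T → ℤ // Monotone n ∧ ∀ u : T, n u ≤ 0} =>
      ∏ u : T, (2 : ℝ) ^ (-(η u * (n.1 u : ℝ)))) :=
  tree_summability_large_scales_general T η hη
end
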